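/- arXiv:2505.19926 — 4 statements merged into one kernel-verified Lean document; each statement's English description precedes it below -/
import Mathlib

section
/- Let r ≥ 2 and let G be a graph of diameter at most 2. If u and v are vertices at distance exactly 2r−1 along an induced path of G, then G contains C_{2r+1} as a subgraph. -/
/-- `tdLE G n` : `G` admits an elimination-forest order whose chains have at most `n` vertices,
i.e. the treedepth of `G` is at most `n`. -/
def tdLE {V : Type*} (G : SimpleGraph V) (n : ℕ) : Prop :=
  ∃ le : V → V → Prop,
    (∀ v, le v v) ∧
    (∀ u v w, le u v → le v w → le u w) ∧
    (∀ u v, le u v → le v u → u = v) ∧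
    (∀ u v w, le u w → le v w → (le u v ∨ le v u)) ∧
    (∀ u v, G.Adj u v → (le u v ∨ le v u)) ∧
    (∀ s : Finset V, (∀ u ∈ s, ∀ v ∈ s, le u v ∨ le v u) → s.card ≤ n)

/-- The treedepth of a graph. -/
noncomputable def treedepth {V : Type*} (G : SimpleGraph V) : ℕ :=
  sInf {n | tdLE G n}

/-- `diamLE G d` : every two vertices of `G` are joined by a walk of length at most `d`. -/
def diamLE {V : Type*} (G : SimpleGraph V) (d : ℕ) : Prop :=
  ∀ u v : V, ∃ p : G.Walk u v, p.length ≤ d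

/-- `G` contains `H` as a subgraph. -/
def ContainsSub {V W : Type*} (G : SimpleGraph V) (H : SimpleGraph W) : Prop :=
  ∃ f : H →g G, Function.Injective f

/-- `G` contains `H` as an induced subgraph. -/
def ContainsInduced {V W : Type*} (G : SimpleGraph V) (H : SimpleGraph W) : Prop :=
  ∃ s : Set V, Nonempty ((G.induce s) ≃g H)

/-- `f : Fin m → V` enumerates an induced path of `G`. -/
def IsInducedPath {V : Type*} (G : SimpleGraph V) {m : ℕ} (f : Fin m → V) : Prop :=
  Function.Injective f ∧
    ∀ i j : Fin m, G.Adj (f i) (f j) ↔ ((i : ℕ) + 1 = j ∨ (j : ℕ) + 1 = i)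

lemma exists_mid_of_walk {V : Type*} {G : SimpleGraph V} {x y : V} (p : G.Walk x y)
    (hp : p.length ≤ 2) (hxy : x ≠ y) (hna : ¬ G.Adj x y) :
    ∃ w, G.Adj x w ∧ G.Adj w y := by
  cases p with
  | nil => exact absurd rfl hxy
  | cons h q =>
    cases q with
    | nil => exact absurd h hna
    | cons h' q' =>
      cases q' with
      | nil => exact ⟨_, h, h'⟩
      | cons h'' q'' => simp [SimpleGraph.Walk.length_cons] at hp

/-- If `G` has diameter at most 2 and contains two vertices at distance exactly `2r−1`
along an induced path (`r ≥ 2`), then `G` contains the cycle `C_{2r+1}` as a subgraph.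
Consequently a `C_{2r+1}`-subgraph-free graph of diameter at most 2 has no induced
path on `2r` vertices. -/
theorem cycle_of_induced_path_diam_two {V : Type*} (G : SimpleGraph V) (r : ℕ) (hr : 2 ≤ r)
    (hdiam : diamLE G 2) {m : ℕ} (f : Fin m → V) (hf : IsInducedPath G f)
    (i j : Fin m) (hij : (i : ℕ) + (2 * r - 1) = j) :
    ContainsSub G (SimpleGraph.cycleGraph (2 * r + 1)) := by
  obtain ⟨hinj, hadj⟩ := hf
  have hjm : (j : ℕ) < m := j.2
  have key : ∀ (a b : ℕ) (ha : a < m) (hb : b < m), a = b → f ⟨a, ha⟩ = f ⟨b, hb⟩ := by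
    intro a b ha hb h; subst h; rfl
  -- extract a common neighbour w of f i and f j
  obtain ⟨p, hp⟩ := hdiam (f i) (f j)
  have hne : ¬ G.Adj (f i) (f j) := by rw [hadj]; omega
  have hxy : f i ≠ f j := by
    intro h
    have : (i : ℕ) = j := congrArg Fin.val (hinj h)
    omega
  obtain ⟨w, hw1, hw2⟩ := exists_mid_of_walk p hp hxy hne
  -- w is not on the path
  have hwf : ∀ k : Fin m, w ≠ f k := by
    intro k hk
    rw [hk] at hw1 hw2
    rw [hadj] at hw1 hw2
    omega
  -- define the cycle map
  have hlt : ∀ k : ℕ, k < 2 * r → (i : ℕ) + k < m := by intro k hk; omega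
  set g : Fin (2 * r + 1) → V := fun k =>
    if h : (k : ℕ) < 2 * r then f ⟨(i : ℕ) + k, hlt k h⟩ else w with hg
  have gval : ∀ (u : Fin (2 * r + 1)) (h : (u : ℕ) < 2 * r),
      g u = f ⟨(i : ℕ) + u, hlt u h⟩ := by
    intro u h; simp only [hg]; rw [dif_pos h]
  have gw : ∀ (u : Fin (2 * r + 1)), ¬ (u : ℕ) < 2 * r → g u = w := by
    intro u h; simp only [hg]; rw [dif_neg h]
  -- adjacency of consecutive vertices
  have hstep : ∀ u : Fin (2 * r + 1), G.Adj (g u) (g (u + 1)) := by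
    intro u
    have hu : (u : ℕ) < 2 * r + 1 := u.2
    have h1 : ((u + 1 : Fin (2 * r + 1)) : ℕ) = ((u : ℕ) + 1) % (2 * r + 1) := by
      simp [Fin.add_def]
    rcases Nat.lt_or_ge (u : ℕ) (2 * r - 1) with h | h
    · have hu1 : ((u + 1 : Fin (2 * r + 1)) : ℕ) = (u : ℕ) + 1 := by
        rw [h1, Nat.mod_eq_of_lt (by omega)]
      rw [gval u (by omega), gval (u + 1) (by omega)]
      rw [hadj]
      left
      simp only [Fin.val_mk]
      omega
    rcases Nat.lt_or_ge (u : ℕ) (2 * r) with h2 | h2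
    · -- u = 2r - 1 : edge f j -- w
      have hu1 : ((u + 1 : Fin (2 * r + 1)) : ℕ) = 2 * r := by
        rw [h1, Nat.mod_eq_of_lt] <;> omega
      have e : g u = f j := (gval u h2).trans (key _ _ _ j.2 (by omega))
      rw [e, gw (u + 1) (by omega)]
      exact hw2.symm
    · -- u = 2r : edge w -- f i
      have hu1 : ((u + 1 : Fin (2 * r + 1)) : ℕ) = 0 := by
        rw [h1]
        have : (u : ℕ) = 2 * r := by omega
        rw [this]
        simp
      have e : g (u + 1) = f i := (gval (u + 1) (by omega)).trans (key _ _ _ i.2 (by omega))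
      rw [gw u (by omega), e]
      exact hw1.symm
  -- the map is a homomorphism
  have hmap : ∀ {a b : Fin (2 * r + 1)},
      (SimpleGraph.cycleGraph (2 * r + 1)).Adj a b → G.Adj (g a) (g b) := by
    intro a b hab
    rw [SimpleGraph.cycleGraph_adj'] at hab
    have hone : ((1 : Fin (2 * r + 1)) : ℕ) = 1 := by
      rw [Fin.val_one', Nat.mod_eq_of_lt (by omega)]
    rcases hab with hab | hab
    · have h1 : a - b = 1 := Fin.ext (by rw [hab, hone])
      have h2 : a = b + 1 := by
        have h3 := sub_eq_iff_eq_add.mp h1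
        rw [h3]; exact add_comm 1 b
      rw [h2]; exact (hstep b).symm
    · have h1 : b - a = 1 := Fin.ext (by rw [hab, hone])
      have h2 : b = a + 1 := by
        have h3 := sub_eq_iff_eq_add.mp h1
        rw [h3]; exact add_comm 1 a
      rw [h2]; exact hstep a
  -- the map is injective
  have hginj : Function.Injective g := by
    intro a b hab
    by_cases ha : (a : ℕ) < 2 * r <;> by_cases hb : (b : ℕ) < 2 * r
    · rw [gval a ha, gval b hb] at hab
      have h4 := congrArg Fin.val (hinj hab)
      simp only [Fin.val_mk] at h4
      apply Fin.ext
      omega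
    · rw [gval a ha, gw b hb] at hab
      exact absurd hab.symm (hwf _)
    · rw [gw a ha, gval b hb] at hab
      exact absurd hab (hwf _)
    · apply Fin.ext; have := a.2; have := b.2; omega
  exact ⟨⟨g, hmap⟩, hginj⟩
end

section
/- Let r ≥ 2, and let G be a C_{2r+1}-subgraph-free graph of diameter at most 2 containing a complete bipartite graph K with parts A, B, each of size at least 2r+1, as a maximal complete bipartite subgraph. If K is an induced subgraph of G, then G = K, i.e., V(G) = A ∪ B. -/
lemma exists_inj_fun {V : Type*} (s : Finset V) (k : ℕ) (hk : 0 < k) (h : k ≤ s.card) :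
    ∃ g : ℕ → V, (∀ i < k, g i ∈ s) ∧ (∀ i < k, ∀ j < k, g i = g j → i = j) := by
  obtain ⟨t, hts, htc⟩ := Finset.exists_subset_card_eq h
  refine ⟨fun i => ((t.equivFinOfCardEq htc).symm ⟨i % k, Nat.mod_lt _ hk⟩ : t), ?_, ?_⟩
  · intro i hi
    exact hts (Finset.coe_mem _)
  · intro i hi j hj hij
    have := (t.equivFinOfCardEq htc).symm.injective (Subtype.ext hij)
    have : i % k = j % k := by simpa [Fin.ext_iff] using this
    rwa [Nat.mod_eq_of_lt hi, Nat.mod_eq_of_lt hj] at this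

lemma cycle_sub {V : Type*} (G : SimpleGraph V) (n : ℕ) (hn : 2 ≤ n) (f : ℕ → V)
    (hinj : ∀ i < n, ∀ j < n, f i = f j → i = j)
    (hadj : ∀ i < n, G.Adj (f i) (f ((i + 1) % n))) :
    ContainsSub G (SimpleGraph.cycleGraph n) := by
  obtain ⟨m, rfl⟩ : ∃ m, n = m + 2 := ⟨n - 2, by omega⟩
  have key : ∀ u : Fin (m + 2), f ((u + 1 : Fin (m + 2)).val) = f ((u.val + 1) % (m + 2)) := by
    intro u
    congr 1
  refine ⟨⟨fun i => f i.val, ?_⟩, ?_⟩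
  · intro u v huv
    rw [SimpleGraph.cycleGraph_adj] at huv
    rcases huv with h | h
    · have hv : u = v + 1 := (sub_eq_iff_eq_add.mp h).trans (add_comm 1 v)
      simp only [hv, key v]
      exact (hadj v.val v.isLt).symm
    · have hv : v = u + 1 := (sub_eq_iff_eq_add.mp h).trans (add_comm 1 u)
      simp only [hv, key u]
      exact hadj u.val u.isLt
  · intro u v h
    exact Fin.ext (hinj u.val u.isLt v.val v.isLt h)

lemma walk_extract {V : Type*} (G : SimpleGraph V) (hdiam : diamLE G 2) (u x : V)
    (hne : u ≠ x) (hnadj : ¬ G.Adj u x) : ∃ w, G.Adj u w ∧ G.Adj w x := by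
  obtain ⟨p, hp⟩ := hdiam u x
  cases p with
  | nil => exact absurd rfl hne
  | cons h q =>
    cases q with
    | nil => exact absurd h hnadj
    | cons h2 q2 =>
      cases q2 with
      | nil => exact ⟨_, h, h2⟩
      | cons h3 q3 => simp [SimpleGraph.Walk.length_cons] at hp

lemma no_mixed {V : Type*} (G : SimpleGraph V) (r : ℕ) (hr : 2 ≤ r)
    (hfree : ¬ ContainsSub G (SimpleGraph.cycleGraph (2 * r + 1)))
    (A B : Set V) (hdisj : Disjoint A B)
    (hA : ∃ sA : Finset V, ↑sA ⊆ A ∧ 2 * r + 1 ≤ sA.card)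
    (hB : ∃ sB : Finset V, ↑sB ⊆ B ∧ 2 * r + 1 ≤ sB.card)
    (hcomplete : ∀ a ∈ A, ∀ b ∈ B, G.Adj a b)
    (v : V) (hvA : v ∉ A) (hvB : v ∉ B)
    (a : V) (ha : a ∈ A) (b : V) (hb : b ∈ B)
    (hva : G.Adj v a) (hvb : G.Adj v b) : False := by
  classical
  obtain ⟨sA, hsA, hsAc⟩ := hA
  obtain ⟨sB, hsB, hsBc⟩ := hB
  obtain ⟨gA, hgAm, hgAi⟩ := exists_inj_fun (sA.erase a) (2 * r) (by omega)
    (by have := Finset.pred_card_le_card_erase (a := a) (s := sA); omega)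
  obtain ⟨gB, hgBm, hgBi⟩ := exists_inj_fun (sB.erase b) (2 * r) (by omega)
    (by have := Finset.pred_card_le_card_erase (a := b) (s := sB); omega)
  set f : ℕ → V := fun i =>
    if i = 0 then v
    else if i % 2 = 1 then (if i = 1 then a else gA ((i - 1) / 2))
    else (if i = 2 * r then b else gB (i / 2)) with hf
  have fv0 : f 0 = v := by simp [hf]
  have fv1 : f 1 = a := by simp [hf]
  have fvodd : ∀ i, i % 2 = 1 → i ≠ 1 → f i = gA ((i - 1) / 2) := by
    intro i h1 h2
    simp only [hf]
    rw [if_neg (by omega), if_pos h1, if_neg h2]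
  have fv2r : f (2 * r) = b := by
    simp only [hf]
    rw [if_neg (by omega), if_neg (by omega)]
    simp
  have fveven : ∀ i, i % 2 = 0 → i ≠ 0 → i ≠ 2 * r → f i = gB (i / 2) := by
    intro i h1 h2 h3
    simp only [hf]
    rw [if_neg h2, if_neg (by omega), if_neg h3]
  -- memberships
  have memA : ∀ i, i % 2 = 1 → i < 2 * r + 1 → f i ∈ A := by
    intro i h1 h2
    rcases eq_or_ne i 1 with rfl | hne
    · rwa [fv1]
    · rw [fvodd i h1 hne]
      exact hsA (Finset.mem_of_mem_erase (hgAm ((i - 1) / 2) (by omega)))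
  have memB : ∀ i, i % 2 = 0 → i ≠ 0 → i < 2 * r + 1 → f i ∈ B := by
    intro i h1 h2 h3
    rcases eq_or_ne i (2 * r) with rfl | hne
    · rwa [fv2r]
    · rw [fveven i h1 h2 hne]
      exact hsB (Finset.mem_of_mem_erase (hgBm (i / 2) (by omega)))
  apply hfree
  apply cycle_sub G (2 * r + 1) (by omega) f
  · -- injectivity
    intro i hi j hj hij
    by_contra hne
    rcases eq_or_ne i 0 with rfl | hi0
    · rw [fv0] at hij
      rcases Nat.even_or_odd j with he | ho
      · have hj0 : j ≠ 0 := fun h => hne h.symm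
        exact hvB (hij ▸ memB j (Nat.even_iff.mp he) hj0 hj)
      · exact hvA (hij ▸ memA j (Nat.odd_iff.mp ho) hj)
    · rcases eq_or_ne j 0 with rfl | hj0
      · rw [fv0] at hij
        rcases Nat.even_or_odd i with he | ho
        · exact hvB (hij.symm ▸ memB i (Nat.even_iff.mp he) hi0 hi)
        · exact hvA (hij.symm ▸ memA i (Nat.odd_iff.mp ho) hi)
      · rcases Nat.even_or_odd i with hei | hoi <;> rcases Nat.even_or_odd j with hej | hoj
        · -- both even, nonzero : in B-side
          have hi2 := Nat.even_iff.mp hei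
          have hj2 := Nat.even_iff.mp hej
          rcases eq_or_ne i (2 * r) with rfl | hir
          · have hjr : j ≠ 2 * r := by omega
            rw [fv2r, fveven j hj2 hj0 hjr] at hij
            exact Finset.notMem_erase b sB (hij ▸ hgBm (j / 2) (by omega))
          · rcases eq_or_ne j (2 * r) with rfl | hjr
            · rw [fv2r, fveven i hi2 hi0 hir] at hij
              exact Finset.notMem_erase b sB (hij ▸ hgBm (i / 2) (by omega))
            · rw [fveven i hi2 hi0 hir, fveven j hj2 hj0 hjr] at hij
              have := hgBi (i / 2) (by omega) (j / 2) (by omega) hij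
              omega
        · exact Set.disjoint_left.mp hdisj (memA j (Nat.odd_iff.mp hoj) hj)
            (hij ▸ memB i (Nat.even_iff.mp hei) hi0 hi)
        · exact Set.disjoint_left.mp hdisj (memA i (Nat.odd_iff.mp hoi) hi)
            (hij ▸ memB j (Nat.even_iff.mp hej) hj0 hj)
        · -- both odd
          have hi2 := Nat.odd_iff.mp hoi
          have hj2 := Nat.odd_iff.mp hoj
          rcases eq_or_ne i 1 with rfl | hi1
          · have hj1 : j ≠ 1 := by omega
            rw [fv1, fvodd j hj2 hj1] at hij
            exact Finset.notMem_erase a sA (hij ▸ hgAm ((j - 1) / 2) (by omega))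
          · rcases eq_or_ne j 1 with rfl | hj1
            · rw [fv1, fvodd i hi2 hi1] at hij
              exact Finset.notMem_erase a sA (hij ▸ hgAm ((i - 1) / 2) (by omega))
            · rw [fvodd i hi2 hi1, fvodd j hj2 hj1] at hij
              have := hgAi ((i - 1) / 2) (by omega) ((j - 1) / 2) (by omega) hij
              omega
  · -- adjacency
    intro i hi
    rcases eq_or_ne i 0 with rfl | hi0
    · have h1 : (0 + 1) % (2 * r + 1) = 1 := Nat.mod_eq_of_lt (by omega)
      rw [h1, fv0, fv1]
      exact hva
    · rcases eq_or_ne i (2 * r) with rfl | hir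
      · have h1 : (2 * r + 1) % (2 * r + 1) = 0 := Nat.mod_self _
        rw [h1, fv0, fv2r]
        exact hvb.symm
      · have hstep : (i + 1) % (2 * r + 1) = i + 1 := Nat.mod_eq_of_lt (by omega)
        rw [hstep]
        rcases Nat.even_or_odd i with he | ho
        · have hi2 := Nat.even_iff.mp he
          exact (hcomplete _ (memA (i + 1) (by omega) (by omega)) _
            (memB i hi2 hi0 hi)).symm
        · have hi2 := Nat.odd_iff.mp ho
          exact hcomplete _ (memA i hi2 hi) _
            (memB (i + 1) (by omega) (by omega) (by omega))

lemma no_A_only {V : Type*} (G : SimpleGraph V) (r : ℕ) (hr : 2 ≤ r)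
    (hfree : ¬ ContainsSub G (SimpleGraph.cycleGraph (2 * r + 1)))
    (A B : Set V) (hdisj : Disjoint A B)
    (hA : ∃ sA : Finset V, ↑sA ⊆ A ∧ 2 * r + 1 ≤ sA.card)
    (hB : ∃ sB : Finset V, ↑sB ⊆ B ∧ 2 * r + 1 ≤ sB.card)
    (hcomplete : ∀ a ∈ A, ∀ b ∈ B, G.Adj a b)
    (hinducedA : ∀ a ∈ A, ∀ a' ∈ A, ¬ G.Adj a a')
    (hdiam : diamLE G 2)
    (v : V) (hvA : v ∉ A) (hvB : v ∉ B)
    (a : V) (ha : a ∈ A) (hva : G.Adj v a)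
    (hnoB : ∀ b ∈ B, ¬ G.Adj v b)
    (a' : V) (ha' : a' ∈ A) (hva' : ¬ G.Adj v a') : False := by
  classical
  obtain ⟨sA, hsA, hsAc⟩ := hA
  obtain ⟨sB, hsB, hsBc⟩ := hB
  have haa' : a ≠ a' := fun h => hva' (h ▸ hva)
  have hvne : v ≠ a' := fun h => hvA (h ▸ ha')
  obtain ⟨w, hw1, hw2⟩ := walk_extract G hdiam v a' hvne hva'
  have hwA : w ∉ A := fun hw => hinducedA w hw a' ha' hw2
  have hwB : w ∉ B := fun hw => hnoB w hw hw1
  have hwv : w ≠ v := hw1.ne'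
  have hcardA : 2 * r - 1 ≤ ((sA.erase a).erase a').card := by
    have h1 := Finset.pred_card_le_card_erase (a := a') (s := sA.erase a)
    have h2 := Finset.pred_card_le_card_erase (a := a) (s := sA)
    omega
  have hcardB : 2 * r ≤ sB.card := by omega
  obtain ⟨gA, hgAm, hgAi⟩ := exists_inj_fun ((sA.erase a).erase a') (2 * r - 1) (by omega) hcardA
  obtain ⟨gB, hgBm, hgBi⟩ := exists_inj_fun sB (2 * r) (by omega) hcardB
  set f : ℕ → V := fun i =>
    if i = 0 then v
    else if i = 2 * r then w
    else if i % 2 = 1 then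
      (if i = 1 then a else if i = 2 * r - 1 then a' else gA ((i - 1) / 2))
    else gB (i / 2) with hf
  have fv0 : f 0 = v := by simp [hf]
  have fv1 : f 1 = a := by
    have h1 : (1:ℕ) ≠ 2 * r := by omega
    simp [hf, h1]
  have fvw : f (2 * r) = w := by
    simp only [hf]
    rw [if_neg (by omega)]
    simp
  have fva' : f (2 * r - 1) = a' := by
    simp only [hf]
    rw [if_neg (by omega), if_neg (by omega), if_pos (by omega), if_neg (by omega)]
    simp
  have fvodd : ∀ i, i % 2 = 1 → i ≠ 1 → i ≠ 2 * r - 1 → f i = gA ((i - 1) / 2) := by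
    intro i h1 h2 h3
    simp only [hf]
    rw [if_neg (by omega), if_neg (by omega), if_pos h1, if_neg h2, if_neg h3]
  have fveven : ∀ i, i % 2 = 0 → i ≠ 0 → i ≠ 2 * r → f i = gB (i / 2) := by
    intro i h1 h2 h3
    simp only [hf]
    rw [if_neg h2, if_neg h3, if_neg (by omega)]
  have memA : ∀ i, i % 2 = 1 → i < 2 * r + 1 → f i ∈ A := by
    intro i h1 h2
    rcases eq_or_ne i 1 with rfl | hne1
    · rwa [fv1]
    · rcases eq_or_ne i (2 * r - 1) with heq | hne2
      · rw [heq, fva']; exact ha'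
      · rw [fvodd i h1 hne1 hne2]
        exact hsA (Finset.mem_of_mem_erase (Finset.mem_of_mem_erase
          (hgAm ((i - 1) / 2) (by omega))))
  have memB : ∀ i, i % 2 = 0 → i ≠ 0 → i ≠ 2 * r → i < 2 * r + 1 → f i ∈ B := by
    intro i h1 h2 h3 h4
    rw [fveven i h1 h2 h3]
    exact hsB (hgBm (i / 2) (by omega))
  apply hfree
  apply cycle_sub G (2 * r + 1) (by omega) f
  · intro i hi j hj hij
    by_contra hne
    -- reduce to class analysis
    have notv : ∀ k, k % 2 = 1 → k < 2 * r + 1 → f k ≠ v ∧ f k ≠ w := by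
      intro k h1 h2
      have := memA k h1 h2
      exact ⟨fun h => hvA (h ▸ this), fun h => hwA (h ▸ this)⟩
    have notv' : ∀ k, k % 2 = 0 → k ≠ 0 → k ≠ 2 * r → k < 2 * r + 1 → f k ≠ v ∧ f k ≠ w := by
      intro k h1 h2 h3 h4
      have := memB k h1 h2 h3 h4
      exact ⟨fun h => hvB (h ▸ this), fun h => hwB (h ▸ this)⟩
    rcases eq_or_ne i 0 with rfl | hi0 <;> rcases eq_or_ne j 0 with rfl | hj0
    · exact hne rfl
    · rcases eq_or_ne j (2 * r) with rfl | hjr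
      · rw [fv0, fvw] at hij; exact hwv hij.symm
      · rcases Nat.even_or_odd j with he | ho
        · exact (notv' j (Nat.even_iff.mp he) hj0 hjr hj).1 (fv0 ▸ hij.symm)
        · exact (notv j (Nat.odd_iff.mp ho) hj).1 (fv0 ▸ hij.symm)
    · rcases eq_or_ne i (2 * r) with rfl | hir
      · rw [fv0, fvw] at hij; exact hwv hij
      · rcases Nat.even_or_odd i with he | ho
        · exact (notv' i (Nat.even_iff.mp he) hi0 hir hi).1 (fv0 ▸ hij)
        · exact (notv i (Nat.odd_iff.mp ho) hi).1 (fv0 ▸ hij)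
    · rcases eq_or_ne i (2 * r) with rfl | hir <;> rcases eq_or_ne j (2 * r) with rfl | hjr
      · exact hne rfl
      · rcases Nat.even_or_odd j with he | ho
        · exact (notv' j (Nat.even_iff.mp he) hj0 hjr hj).2 (fvw ▸ hij.symm)
        · exact (notv j (Nat.odd_iff.mp ho) hj).2 (fvw ▸ hij.symm)
      · rcases Nat.even_or_odd i with he | ho
        · exact (notv' i (Nat.even_iff.mp he) hi0 hir hi).2 (fvw ▸ hij)
        · exact (notv i (Nat.odd_iff.mp ho) hi).2 (fvw ▸ hij)
      · rcases Nat.even_or_odd i with hei | hoi <;> rcases Nat.even_or_odd j with hej | hoj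
        · -- both even middles : gB injective
          have hi2 := Nat.even_iff.mp hei
          have hj2 := Nat.even_iff.mp hej
          rw [fveven i hi2 hi0 hir, fveven j hj2 hj0 hjr] at hij
          have := hgBi (i / 2) (by omega) (j / 2) (by omega) hij
          omega
        · exact Set.disjoint_left.mp hdisj (memA j (Nat.odd_iff.mp hoj) hj)
            (hij ▸ memB i (Nat.even_iff.mp hei) hi0 hir hi)
        · exact Set.disjoint_left.mp hdisj (memA i (Nat.odd_iff.mp hoi) hi)
            (hij ▸ memB j (Nat.even_iff.mp hej) hj0 hjr hj)
        · -- both odd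
          have hi2 := Nat.odd_iff.mp hoi
          have hj2 := Nat.odd_iff.mp hoj
          have notspec : ∀ k, k % 2 = 1 → k ≠ 1 → k ≠ 2 * r - 1 → k < 2 * r + 1 →
              f k ≠ a ∧ f k ≠ a' := by
            intro k h1 h2 h3 h4
            rw [fvodd k h1 h2 h3]
            constructor
            · intro h
              exact Finset.notMem_erase a sA (Finset.mem_of_mem_erase
                (h ▸ hgAm ((k - 1) / 2) (by omega)))
            · intro h
              exact Finset.notMem_erase a' (sA.erase a) (h ▸ hgAm ((k - 1) / 2) (by omega))
          rcases eq_or_ne i 1 with rfl | hi1 <;> rcases eq_or_ne j 1 with rfl | hj1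
          · exact hne rfl
          · rcases eq_or_ne j (2 * r - 1) with heq | hj3
            · rw [fv1, heq, fva'] at hij; exact haa' hij
            · exact (notspec j hj2 hj1 hj3 hj).1 (fv1 ▸ hij.symm)
          · rcases eq_or_ne i (2 * r - 1) with heq | hi3
            · rw [fv1, heq, fva'] at hij; exact haa' hij.symm
            · exact (notspec i hi2 hi1 hi3 hi).1 (fv1 ▸ hij)
          · rcases eq_or_ne i (2 * r - 1) with heqi | hi3 <;>
              rcases eq_or_ne j (2 * r - 1) with heqj | hj3
            · omega
            · exact (notspec j hj2 hj1 hj3 hj).2 ((heqi ▸ fva') ▸ hij.symm)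
            · exact (notspec i hi2 hi1 hi3 hi).2 ((heqj ▸ fva') ▸ hij)
            · rw [fvodd i hi2 hi1 hi3, fvodd j hj2 hj1 hj3] at hij
              have := hgAi ((i - 1) / 2) (by omega) ((j - 1) / 2) (by omega) hij
              omega
  · intro i hi
    rcases eq_or_ne i 0 with rfl | hi0
    · have h1 : (0 + 1) % (2 * r + 1) = 1 := Nat.mod_eq_of_lt (by omega)
      rw [h1, fv0, fv1]
      exact hva
    · rcases eq_or_ne i (2 * r) with rfl | hir
      · have h1 : (2 * r + 1) % (2 * r + 1) = 0 := Nat.mod_self _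
        rw [h1, fv0, fvw]
        exact hw1.symm
      · have hstep : (i + 1) % (2 * r + 1) = i + 1 := Nat.mod_eq_of_lt (by omega)
        rw [hstep]
        rcases eq_or_ne i (2 * r - 1) with heq | hi3
        · rw [heq, fva']
          have : 2 * r - 1 + 1 = 2 * r := by omega
          rw [this, fvw]
          exact hw2.symm
        · rcases Nat.even_or_odd i with he | ho
          · have hi2 := Nat.even_iff.mp he
            exact (hcomplete _ (memA (i + 1) (by omega) (by omega)) _
              (memB i hi2 hi0 hir hi)).symm
          · have hi2 := Nat.odd_iff.mp ho
            exact hcomplete _ (memA i hi2 hi) _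
              (memB (i + 1) (by omega) (by omega) (by omega) (by omega))

/-- Let `r ≥ 2` and let `G` be a `C_{2r+1}`-subgraph-free graph of diameter at most 2
containing a maximal complete bipartite subgraph `K` with parts `A`, `B`, each of size at
least `2r+1`. If `K` is an induced subgraph of `G`, then `G = K`, i.e. `V(G) = A ∪ B`. -/
theorem maximal_biclique_is_whole_graph {V : Type*} (G : SimpleGraph V) (r : ℕ) (hr : 2 ≤ r)
    (hfree : ¬ ContainsSub G (SimpleGraph.cycleGraph (2 * r + 1)))
    (hdiam : diamLE G 2) (A B : Set V) (hdisj : Disjoint A B)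
    (hA : ∃ sA : Finset V, ↑sA ⊆ A ∧ 2 * r + 1 ≤ sA.card)
    (hB : ∃ sB : Finset V, ↑sB ⊆ B ∧ 2 * r + 1 ≤ sB.card)
    (hcomplete : ∀ a ∈ A, ∀ b ∈ B, G.Adj a b)
    (hinducedA : ∀ a ∈ A, ∀ a' ∈ A, ¬ G.Adj a a')
    (hinducedB : ∀ b ∈ B, ∀ b' ∈ B, ¬ G.Adj b b')
    (hmax : ∀ v : V, v ∉ A → v ∉ B →
      ¬ ((∀ b ∈ B, G.Adj v b) ∨ (∀ a ∈ A, G.Adj v a))) :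
    ∀ v : V, v ∈ A ∪ B := by
  intro v
  by_contra hv
  simp only [Set.mem_union, not_or] at hv
  obtain ⟨hvA, hvB⟩ := hv
  have hAB := hmax v hvA hvB
  push_neg at hAB
  obtain ⟨⟨b0, hb0, hnadjb0⟩, ⟨a0, ha0, hnadja0⟩⟩ := hAB
  have hnoA : ∀ x ∈ A, ¬ G.Adj v x := by
    intro x hx hadj
    have hnoB : ∀ b ∈ B, ¬ G.Adj v b := fun b hb hvb =>
      no_mixed G r hr hfree A B hdisj hA hB hcomplete v hvA hvB x hx b hb hadj hvb
    exact no_A_only G r hr hfree A B hdisj hA hB hcomplete hinducedA hdiam v hvA hvB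
      x hx hadj hnoB a0 ha0 hnadja0
  have hnoB : ∀ x ∈ B, ¬ G.Adj v x := by
    intro x hx hadj
    have hcomplete' : ∀ b ∈ B, ∀ a ∈ A, G.Adj b a := fun b hb a ha => (hcomplete a ha b hb).symm
    exact no_A_only G r hr hfree B A hdisj.symm hB hA hcomplete' hinducedB hdiam v hvB hvA
      x hx hadj (fun a ha h => hnoA a ha h) b0 hb0 hnadjb0
  obtain ⟨sA, hsA, hsAc⟩ := hA
  obtain ⟨a1, ha1⟩ : sA.Nonempty := Finset.card_pos.mp (by omega)
  have ha1A : a1 ∈ A := hsA ha1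
  have hvne : v ≠ a1 := fun h => hvA (h ▸ ha1A)
  obtain ⟨w, hw1, hw2⟩ := walk_extract G hdiam v a1 hvne (hnoA a1 ha1A)
  have hwA : w ∉ A := fun h => hinducedA w h a1 ha1A hw2
  have hwB : w ∉ B := fun h => hnoB w h hw1
  have hwnoB : ∀ b ∈ B, ¬ G.Adj w b := fun b hb h =>
    no_mixed G r hr hfree A B hdisj ⟨sA, hsA, hsAc⟩ hB hcomplete w hwA hwB a1 ha1A b hb hw2 h
  have hmw := hmax w hwA hwB
  push_neg at hmw
  obtain ⟨-, a2, ha2, hnadj2⟩ := hmw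
  exact no_A_only G r hr hfree A B hdisj ⟨sA, hsA, hsAc⟩ hB hcomplete hinducedA hdiam
    w hwA hwB a1 ha1A hw2 hwnoB a2 ha2 hnadj2
end

section
/- Let ℓ₁, ℓ₂ > 2 be integers and let G be a graph of diameter at most 2 containing an induced path P = (p₀, …, p_m) with m ≥ 4(ℓ₁+ℓ₂−1). Then G contains as a subgraph two cycles, one of length 2ℓ₁ and one of length 2ℓ₂, sharing exactly one common vertex (i.e., G contains C^V_{2ℓ₁,2ℓ₂} as a subgraph). -/
/-- `G` contains, as a subgraph, two cycles of lengths `a` and `b` sharing exactly one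
common vertex (the graph `C^V_{a,b}`). -/
def ContainsCV {V : Type*} (G : SimpleGraph V) (a b : ℕ) : Prop :=
  ∃ c d : ℕ → V,
    (∀ i < a, ∀ j < a, c i = c j → i = j) ∧
    (∀ i < b, ∀ j < b, d i = d j → i = j) ∧
    (∀ i < a, G.Adj (c i) (c ((i + 1) % a))) ∧
    (∀ i < b, G.Adj (d i) (d ((i + 1) % b))) ∧
    c 0 = d 0 ∧
    (∀ i < a, ∀ j < b, c i = d j → (i = 0 ∧ j = 0))

lemma swapCV {V : Type*} {G : SimpleGraph V} {a b : ℕ} (h : ContainsCV G a b) :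
    ContainsCV G b a := by
  obtain ⟨c, d, h1, h2, h3, h4, h5, h6⟩ := h
  exact ⟨d, c, h2, h1, h4, h3, h5.symm, fun j hj i hi hji =>
    (h6 i hi j hj hji.symm).symm⟩

lemma cn_lemma {V : Type*} {G : SimpleGraph V} (hdiam : diamLE G 2)
    {g : ℕ → V} {N : ℕ}
    (hginj : ∀ i ≤ N, ∀ j ≤ N, g i = g j → i = j)
    (hgadj : ∀ i ≤ N, ∀ j ≤ N, (G.Adj (g i) (g j) ↔ (i + 1 = j ∨ j + 1 = i)))
    {i j : ℕ} (hij : i + 3 ≤ j) (hj : j ≤ N) :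
    ∃ x, G.Adj x (g i) ∧ G.Adj x (g j) ∧ ∀ k ≤ N, x ≠ g k := by
  have hi : i ≤ N := by omega
  obtain ⟨p, hp⟩ := hdiam (g i) (g j)
  interval_cases hl : p.length
  · exact absurd (hginj i hi j hj (SimpleGraph.Walk.eq_of_length_eq_zero hl)) (by omega)
  · have h := p.adj_getVert_succ (by omega : 0 < p.length)
    rw [SimpleGraph.Walk.getVert_zero, show (0:ℕ)+1 = p.length by omega,
      SimpleGraph.Walk.getVert_length] at h
    have := (hgadj i hi j hj).mp h
    omega
  · have h1 := p.adj_getVert_succ (by omega : 0 < p.length)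
    have h2 := p.adj_getVert_succ (by omega : 1 < p.length)
    rw [SimpleGraph.Walk.getVert_zero] at h1
    rw [show (1:ℕ)+1 = p.length by omega, SimpleGraph.Walk.getVert_length] at h2
    refine ⟨p.getVert 1, h1.symm, h2, fun k hk hxk => ?_⟩
    rw [hxk] at h1 h2
    have h1' := (hgadj i hi k hk).mp h1
    have h2' := (hgadj k hk j hj).mp h2
    omega

lemma master_lemma {V : Type*} {G : SimpleGraph V} (A B : ℕ) (hA : 3 ≤ A) (hB : 3 ≤ B)
    {g : ℕ → V} {N : ℕ}
    (hginj : ∀ i ≤ N, ∀ j ≤ N, g i = g j → i = j)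
    (hgadj : ∀ i ≤ N, ∀ j ≤ N, (G.Adj (g i) (g j) ↔ (i + 1 = j ∨ j + 1 = i)))
    (a s b : ℕ) (has : a + (2 * A - 2) = s) (hsb : s + (2 * B - 2) = b) (hbN : b ≤ N)
    (x y : V) (hx1 : G.Adj x (g a)) (hx2 : G.Adj x (g s))
    (hy1 : G.Adj y (g s)) (hy2 : G.Adj y (g b)) (hxy : x ≠ y)
    (hxg : ∀ k ≤ N, x ≠ g k) (hyg : ∀ k ≤ N, y ≠ g k) :
    ContainsCV G (2 * A) (2 * B) := by
  refine ⟨fun i => if i = 2 * A - 1 then x else g (s - i),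
          fun j => if j = 2 * B - 1 then y else g (s + j), ?_, ?_, ?_, ?_, ?_, ?_⟩
  · intro i hi j hj hij
    dsimp only at hij
    split_ifs at hij with h1 h2 h2
    · omega
    · exact absurd hij (hxg _ (by omega))
    · exact absurd hij.symm (hxg _ (by omega))
    · have := hginj _ (by omega) _ (by omega) hij
      omega
  · intro i hi j hj hij
    dsimp only at hij
    split_ifs at hij with h1 h2 h2
    · omega
    · exact absurd hij (hyg _ (by omega))
    · exact absurd hij.symm (hyg _ (by omega))
    · have := hginj _ (by omega) _ (by omega) hij
      omega
  · intro i hi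
    dsimp only
    rcases Nat.lt_or_ge i (2 * A - 2) with h | h
    · rw [Nat.mod_eq_of_lt (by omega), if_neg (by omega), if_neg (by omega)]
      exact (hgadj _ (by omega) _ (by omega)).mpr (Or.inr (by omega))
    · rcases Nat.eq_or_lt_of_le h with h' | h'
      · rw [Nat.mod_eq_of_lt (by omega), if_neg (by omega), if_pos (by omega)]
        have : s - i = a := by omega
        rw [this]
        exact hx1.symm
      · have hi' : i = 2 * A - 1 := by omega
        have : (i + 1) % (2 * A) = 0 := by
          have : i + 1 = 2 * A := by omega
          rw [this, Nat.mod_self]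
        rw [this, if_pos hi', if_neg (by omega), Nat.sub_zero]
        exact hx2
  · intro j hj
    dsimp only
    rcases Nat.lt_or_ge j (2 * B - 2) with h | h
    · rw [Nat.mod_eq_of_lt (by omega), if_neg (by omega), if_neg (by omega)]
      exact (hgadj _ (by omega) _ (by omega)).mpr (Or.inl (by omega))
    · rcases Nat.eq_or_lt_of_le h with h' | h'
      · rw [Nat.mod_eq_of_lt (by omega), if_neg (by omega), if_pos (by omega)]
        have : s + j = b := by omega
        rw [this]
        exact hy2.symm
      · have hj' : j = 2 * B - 1 := by omega
        have : (j + 1) % (2 * B) = 0 := by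
          have : j + 1 = 2 * B := by omega
          rw [this, Nat.mod_self]
        rw [this, if_pos hj', if_neg (by omega), Nat.add_zero]
        exact hy1
  · dsimp only
    rw [if_neg (by omega), if_neg (by omega), Nat.sub_zero, Nat.add_zero]
  · intro i hi j hj hij
    dsimp only at hij
    split_ifs at hij with h1 h2 h2
    · exact absurd hij hxy
    · exact absurd hij (hxg _ (by omega))
    · exact absurd hij.symm (hyg _ (by omega))
    · have := hginj _ (by omega) _ (by omega) hij
      omega

lemma case4_lemma {V : Type*} {G : SimpleGraph V} (A B : ℕ) (hA : 3 ≤ A) (hB : 3 ≤ B)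
    {g : ℕ → V} {N : ℕ}
    (hginj : ∀ i ≤ N, ∀ j ≤ N, g i = g j → i = j)
    (hgadj : ∀ i ≤ N, ∀ j ≤ N, (G.Adj (g i) (g j) ↔ (i + 1 = j ∨ j + 1 = i)))
    (p r : ℕ) (hpr : p + (2 * A - 2) < r) (hrN : r + (2 * B - 2) ≤ N)
    (x : V) (hxp : G.Adj x (g p)) (hxq : G.Adj x (g (p + (2 * A - 2))))
    (hxr : G.Adj x (g r)) (hxt : G.Adj x (g (r + (2 * B - 2))))
    (hxg : ∀ k ≤ N, x ≠ g k) :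
    ContainsCV G (2 * A) (2 * B) := by
  refine ⟨fun i => if i = 0 then x else g (p + (i - 1)),
          fun j => if j = 0 then x else g (r + (j - 1)), ?_, ?_, ?_, ?_, ?_, ?_⟩
  · intro i hi j hj hij
    dsimp only at hij
    split_ifs at hij with h1 h2 h2
    · omega
    · exact absurd hij (hxg _ (by omega))
    · exact absurd hij.symm (hxg _ (by omega))
    · have := hginj _ (by omega) _ (by omega) hij
      omega
  · intro i hi j hj hij
    dsimp only at hij
    split_ifs at hij with h1 h2 h2
    · omega
    · exact absurd hij (hxg _ (by omega))
    · exact absurd hij.symm (hxg _ (by omega))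
    · have := hginj _ (by omega) _ (by omega) hij
      omega
  · intro i hi
    dsimp only
    rcases Nat.eq_or_lt_of_le (Nat.zero_le i) with h0 | h0
    · rw [Nat.mod_eq_of_lt (by omega), if_pos h0.symm, if_neg (by omega)]
      have : p + (0 + 1 - 1) = p := by omega
      rw [← h0, this]
      exact hxp
    · rcases Nat.lt_or_ge i (2 * A - 1) with h | h
      · rw [Nat.mod_eq_of_lt (by omega), if_neg (by omega), if_neg (by omega)]
        exact (hgadj _ (by omega) _ (by omega)).mpr (Or.inl (by omega))
      · have hi' : i = 2 * A - 1 := by omega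
        have hmod : (i + 1) % (2 * A) = 0 := by
          have : i + 1 = 2 * A := by omega
          rw [this, Nat.mod_self]
        rw [hmod, if_neg (by omega), if_pos rfl]
        have : p + (i - 1) = p + (2 * A - 2) := by omega
        rw [this]
        exact hxq.symm
  · intro j hj
    dsimp only
    rcases Nat.eq_or_lt_of_le (Nat.zero_le j) with h0 | h0
    · rw [Nat.mod_eq_of_lt (by omega), if_pos h0.symm, if_neg (by omega)]
      have : r + (0 + 1 - 1) = r := by omega
      rw [← h0, this]
      exact hxr
    · rcases Nat.lt_or_ge j (2 * B - 1) with h | h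
      · rw [Nat.mod_eq_of_lt (by omega), if_neg (by omega), if_neg (by omega)]
        exact (hgadj _ (by omega) _ (by omega)).mpr (Or.inl (by omega))
      · have hj' : j = 2 * B - 1 := by omega
        have hmod : (j + 1) % (2 * B) = 0 := by
          have : j + 1 = 2 * B := by omega
          rw [this, Nat.mod_self]
        rw [hmod, if_neg (by omega), if_pos rfl]
        have : r + (j - 1) = r + (2 * B - 2) := by omega
        rw [this]
        exact hxt.symm
  · simp
  · intro i hi j hj hij
    dsimp only at hij
    split_ifs at hij with h1 h2 h2
    · exact ⟨h1, h2⟩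
    · exact absurd hij (hxg _ (by omega))
    · exact absurd hij.symm (hxg _ (by omega))
    · have := hginj _ (by omega) _ (by omega) hij
      omega

lemma pathNat {V : Type*} {G : SimpleGraph V} {m : ℕ} (f : Fin (m+1) → V)
    (hf : IsInducedPath G f) :
    ∃ g : ℕ → V, (∀ i ≤ m, ∀ j ≤ m, g i = g j → i = j) ∧
      (∀ i ≤ m, ∀ j ≤ m, (G.Adj (g i) (g j) ↔ (i + 1 = j ∨ j + 1 = i))) := by
  refine ⟨fun n => f ⟨n % (m+1), Nat.mod_lt n (Nat.succ_pos m)⟩, ?_, ?_⟩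
  · intro i hi j hj h
    have h2 := congrArg Fin.val (hf.1 h)
    simp only [] at h2
    rwa [Nat.mod_eq_of_lt (by omega), Nat.mod_eq_of_lt (by omega)] at h2
  · intro i hi j hj
    have := hf.2 ⟨i % (m+1), Nat.mod_lt i (Nat.succ_pos m)⟩
      ⟨j % (m+1), Nat.mod_lt j (Nat.succ_pos m)⟩
    simpa [Nat.mod_eq_of_lt (show i < m+1 by omega),
      Nat.mod_eq_of_lt (show j < m+1 by omega)] using this


/-- If `ℓ₁, ℓ₂ > 2` and `G` is a graph of diameter at most 2 containing an induced path
`(p₀, …, p_m)` with `m ≥ 4(ℓ₁+ℓ₂−1)`, then `G` contains `C^V_{2ℓ₁,2ℓ₂}` as a subgraph. -/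
theorem containsCV_of_long_induced_path {V : Type*} (G : SimpleGraph V)
    (ℓ₁ ℓ₂ : ℕ) (h₁ : 2 < ℓ₁) (h₂ : 2 < ℓ₂) (hdiam : diamLE G 2)
    (m : ℕ) (hm : 4 * (ℓ₁ + ℓ₂ - 1) ≤ m) (f : Fin (m + 1) → V)
    (hf : IsInducedPath G f) :
    ContainsCV G (2 * ℓ₁) (2 * ℓ₂) := by
  obtain ⟨g, hginj, hgadj⟩ := pathNat f hf
  obtain ⟨x₁, hx1a, hx1b, hx1g⟩ :=
    cn_lemma hdiam hginj hgadj (i := 0) (j := 2*ℓ₁-2) (by omega) (by omega)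
  obtain ⟨x₂, hx2a, hx2b, hx2g⟩ :=
    cn_lemma hdiam hginj hgadj (i := 2*ℓ₁-2) (j := 2*ℓ₁-2 + (2*ℓ₂-2)) (by omega) (by omega)
  obtain ⟨x₃, hx3a, hx3b, hx3g⟩ :=
    cn_lemma hdiam hginj hgadj (i := 2*ℓ₁-2 + (2*ℓ₂-2))
      (j := 2*ℓ₁-2 + (2*ℓ₂-2) + (2*ℓ₁-2)) (by omega) (by omega)
  obtain ⟨x₄, hx4a, hx4b, hx4g⟩ :=
    cn_lemma hdiam hginj hgadj (i := 2*ℓ₁-2 + (2*ℓ₂-2) + (2*ℓ₁-2))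
      (j := 2*ℓ₁-2 + (2*ℓ₂-2) + (2*ℓ₁-2) + (2*ℓ₂-2)) (by omega) (by omega)
  by_cases h12 : x₁ = x₂
  · by_cases h23 : x₂ = x₃
    · by_cases h34 : x₃ = x₄
      · rw [h12, h23, h34] at hx1a hx1b hx1g
        rw [h34] at hx3b
        refine case4_lemma ℓ₁ ℓ₂ (by omega) (by omega) hginj hgadj
          0 (2*ℓ₁-2 + (2*ℓ₂-2) + (2*ℓ₁-2)) (by omega) (by omega)
          x₄ hx1a ?_ hx3b hx4b hx1g
        have h0 : 0 + (2*ℓ₁-2) = 2*ℓ₁-2 := Nat.zero_add _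
        rw [h0]
        exact hx1b
      · exact master_lemma ℓ₁ ℓ₂ (by omega) (by omega) hginj hgadj
          (2*ℓ₁-2 + (2*ℓ₂-2)) (2*ℓ₁-2 + (2*ℓ₂-2) + (2*ℓ₁-2))
          (2*ℓ₁-2 + (2*ℓ₂-2) + (2*ℓ₁-2) + (2*ℓ₂-2)) rfl rfl (by omega)
          x₃ x₄ hx3a hx3b hx4a hx4b h34 hx3g hx4g
    · exact swapCV (master_lemma ℓ₂ ℓ₁ (by omega) (by omega) hginj hgadj
        (2*ℓ₁-2) (2*ℓ₁-2 + (2*ℓ₂-2)) (2*ℓ₁-2 + (2*ℓ₂-2) + (2*ℓ₁-2)) rfl rfl (by omega)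
        x₂ x₃ hx2a hx2b hx3a hx3b h23 hx2g hx3g)
  · exact master_lemma ℓ₁ ℓ₂ (by omega) (by omega) hginj hgadj
      0 (2*ℓ₁-2) (2*ℓ₁-2 + (2*ℓ₂-2)) (by omega) rfl (by omega)
      x₁ x₂ hx1a hx1b hx2a hx2b h12 hx1g hx2g
end

section
/- For every n and every m ≥ 1, in the graph G_n of the previous construction (x adjacent to p_i iff i mod 4 ∈ {0,1}, y adjacent to p_i iff i mod 4 ∈ {2,3}), the subgraph induced by {x} ∪ V(P) contains no cycle of length 4m (it is C_{4m}-subgraph-free); the same holds for {y} ∪ V(P). -/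
/-- The graph `G_n`: a path `p₀, …, p_n` (the vertices `Sum.inl i`) together with two extra
vertices `x = Sum.inr 0` and `y = Sum.inr 1`, where `x` is joined to `p_i` iff
`i mod 4 ∈ {0,1}` and `y` is joined to `p_i` iff `i mod 4 ∈ {2,3}`. -/
def Gconstr (n : ℕ) : SimpleGraph (Fin (n + 1) ⊕ Fin 2) :=
  SimpleGraph.fromRel (fun a b =>
    (∃ i j : Fin (n + 1), a = Sum.inl i ∧ b = Sum.inl j ∧ (i : ℕ) + 1 = j) ∨
    (∃ i : Fin (n + 1), a = Sum.inr 0 ∧ b = Sum.inl i ∧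
      ((i : ℕ) % 4 = 0 ∨ (i : ℕ) % 4 = 1)) ∨
    (∃ i : Fin (n + 1), a = Sum.inr 1 ∧ b = Sum.inl i ∧
      ((i : ℕ) % 4 = 2 ∨ (i : ℕ) % 4 = 3)))

/-!
A cycle avoiding both apexes runs injectively along the path `P` and must come back, which forces
length 2. Otherwise it passes through an apex exactly once, and the rest of it is an injective walk
along `P` between two neighbours `p_i`, `p_j` of that apex. Such a walk is monotone, so a cycle of
length `L` gives `|i - j| = L - 2`. The neighbours of an apex have indices in two consecutive
residues mod 4, so `|i - j| ≢ 2 (mod 4)`, and hence `4 ∤ L`.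
-/

open SimpleGraph Set Function

theorem abs_sub_eq_of_injOn_of_abs_sub_succ_eq_one {a : ℕ → ℤ} {N : ℕ}
    (hstep : ∀ j < N, |a (j + 1) - a j| = 1) (hinj : InjOn a (Iic N)) : |a N - a 0| = N := by
  rcases N.eq_zero_or_pos with rfl | hN
  · simp
  have hconst : ∀ j < N, a (j + 1) - a j = a 1 - a 0 := by
    intro j hj
    induction j with
    | zero => rfl
    | succ j ih =>
      -- two opposite steps in a row would revisit `a j`
      have hback : a (j + 1 + 1) ≠ a j := fun h => by
        have := hinj (mem_Iic.2 (by omega)) (mem_Iic.2 (by omega)) h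
        omega
      have h₁ := hstep j (by omega)
      have h₂ := hstep (j + 1) hj
      rw [abs_eq zero_le_one] at h₁ h₂
      have := ih (by omega)
      omega
  have hlin : ∀ j ≤ N, a j = a 0 + j * (a 1 - a 0) := by
    intro j hj
    induction j with
    | zero => simp
    | succ j ih =>
      have := hconst j (by omega)
      have := ih (by omega)
      push_cast
      linarith
  rw [hlin N le_rfl, add_sub_cancel_left, abs_mul, hstep 0 hN, mul_one, Nat.abs_cast]

theorem Function.Periodic.injOn_Iio_const_add {α : Type*} {c : ℕ → α} {L : ℕ}
    (hper : Periodic c L) (hinj : InjOn c (Iio L)) (k : ℕ) :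
    InjOn (fun j => c (k + j)) (Iio L) := by
  intro j hj j' hj' h
  have hL : 0 < L := by simp only [mem_Iio] at hj; omega
  have hmod : (k + j) % L = (k + j') % L :=
    hinj (Nat.mod_lt _ hL) (Nat.mod_lt _ hL) (by simpa only [hper.map_mod_nat] using h)
  exact (Nat.ModEq.add_left_cancel' k hmod).eq_of_lt_of_lt hj hj'

theorem ContainsSub.exists_periodic_injOn {V : Type*} {G : SimpleGraph V} {L : ℕ} (hL : 2 ≤ L)
    (h : ContainsSub G (cycleGraph L)) :
    ∃ c : ℕ → V, (∀ j, G.Adj (c j) (c (j + 1))) ∧ Periodic c L ∧ InjOn c (Iio L) := by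
  obtain ⟨l, rfl⟩ : ∃ l, L = l + 2 := ⟨L - 2, by omega⟩
  obtain ⟨F, hF⟩ := h
  open Fin.NatCast in
  refine ⟨fun j => F (j : Fin (l + 2)), fun j => F.map_adj ?_, fun j => ?_, ?_⟩
  · simp [cycleGraph_adj]
  · simp
  · intro j hj j' hj' h
    simpa [Fin.ext_iff, Nat.mod_eq_of_lt hj, Nat.mod_eq_of_lt hj'] using hF h

theorem Sum.isLeft_of_ne_inr_of_ne_inr {α : Type*} {v : α ⊕ Fin 2} {z w : Fin 2} (hzw : z ≠ w)
    (hz : v ≠ .inr z) (hw : v ≠ .inr w) : v.isLeft := by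
  rcases v with _ | u
  · rfl
  · simp only [ne_eq, Sum.inr.injEq] at hz hw; omega

namespace Gconstr

variable {n : ℕ}

theorem adj_inl_inl {i j : Fin (n + 1)} :
    (Gconstr n).Adj (.inl i) (.inl j) ↔ |(i : ℤ) - j| = 1 := by
  simp only [Gconstr, fromRel_adj, ne_eq, Sum.inl.injEq, reduceCtorEq, false_and, or_false,
    exists_and_left, exists_eq_left']
  rw [abs_eq zero_le_one, Fin.ext_iff]
  omega

theorem adj_inr_inl {z : Fin 2} {i : Fin (n + 1)} :
    (Gconstr n).Adj (.inr z) (.inl i) ↔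
      (z = 0 ∧ ((i : ℕ) % 4 = 0 ∨ (i : ℕ) % 4 = 1)) ∨
        (z = 1 ∧ ((i : ℕ) % 4 = 2 ∨ (i : ℕ) % 4 = 3)) := by
  simp [Gconstr]

theorem sub_emod_four_ne_two {z : Fin 2} {i j : Fin (n + 1)}
    (hi : (Gconstr n).Adj (.inr z) (.inl i)) (hj : (Gconstr n).Adj (.inr z) (.inl j)) :
    ((i : ℤ) - j) % 4 ≠ 2 := by
  rw [adj_inr_inl] at hi hj
  omega

-- apexes get the junk index 0; it is only ever read on path vertices
def pathIndex : Fin (n + 1) ⊕ Fin 2 → ℤ := Sum.elim (fun i => i) 0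

@[simp]
theorem pathIndex_inl (i : Fin (n + 1)) : pathIndex (.inl i) = i := rfl

theorem abs_pathIndex_sub_eq_one {u v : Fin (n + 1) ⊕ Fin 2} (hu : u.isLeft) (hv : v.isLeft)
    (h : (Gconstr n).Adj u v) : |pathIndex v - pathIndex u| = 1 := by
  obtain ⟨i, rfl⟩ := Sum.isLeft_iff.1 hu
  obtain ⟨j, rfl⟩ := Sum.isLeft_iff.1 hv
  rw [adj_inl_inl] at h
  simpa [abs_sub_comm] using h

theorem abs_pathIndex_sub_eq {c : ℕ → Fin (n + 1) ⊕ Fin 2} {N : ℕ}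
    (hleft : ∀ j ≤ N, (c j).isLeft) (hadj : ∀ j < N, (Gconstr n).Adj (c j) (c (j + 1)))
    (hinj : InjOn c (Iic N)) : |pathIndex (c N) - pathIndex (c 0)| = N := by
  refine abs_sub_eq_of_injOn_of_abs_sub_succ_eq_one (a := pathIndex ∘ c)
    (fun j hj => abs_pathIndex_sub_eq_one (hleft j hj.le) (hleft (j + 1) hj) (hadj j hj)) ?_
  intro j hj j' hj' h
  obtain ⟨i, hi⟩ := Sum.isLeft_iff.1 (hleft j hj)
  obtain ⟨i', hi'⟩ := Sum.isLeft_iff.1 (hleft j' hj')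
  refine hinj hj hj' ?_
  simp only [comp_apply, hi, hi', pathIndex_inl, Nat.cast_inj, Fin.val_inj] at h ⊢
  rw [h]

theorem eq_two_of_closed_of_isLeft {c : ℕ → Fin (n + 1) ⊕ Fin 2} {L : ℕ} (hL : 0 < L)
    (hadj : ∀ j, (Gconstr n).Adj (c j) (c (j + 1))) (hclosed : c L = c 0)
    (hinj : InjOn c (Iio L)) (hleft : ∀ j, (c j).isLeft) : L = 2 := by
  obtain ⟨N, rfl⟩ : ∃ N, L = N + 1 := ⟨L - 1, by omega⟩
  have hpath := abs_pathIndex_sub_eq (N := N) (fun j _ => hleft j) (fun j _ => hadj j)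
    (hinj.mono fun j hj => Nat.lt_succ_of_le hj)
  have hback := abs_pathIndex_sub_eq_one (hleft _) (hleft _) (hadj N)
  rw [hclosed, abs_sub_comm, hpath] at hback
  omega

theorem not_four_dvd_of_closed_of_eq_inr {c : ℕ → Fin (n + 1) ⊕ Fin 2} {L : ℕ} {z w : Fin 2}
    (hzw : z ≠ w) (hL : 2 ≤ L) (hadj : ∀ j, (Gconstr n).Adj (c j) (c (j + 1)))
    (hclosed : c L = c 0) (hinj : InjOn c (Iio L)) (h0 : c 0 = .inr z)
    (hw : ∀ j, c j ≠ .inr w) : ¬ 4 ∣ L := by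
  obtain ⟨N, rfl⟩ : ∃ N, L = N + 2 := ⟨L - 2, by omega⟩
  have hleft : ∀ j ≤ N, (c (j + 1)).isLeft := fun j hj =>
    Sum.isLeft_of_ne_inr_of_ne_inr hzw
      (h0 ▸ fun h => absurd (hinj (by simp only [mem_Iio]; omega) (by simp) h) (by omega))
      (hw _)
  have hpath := abs_pathIndex_sub_eq (c := fun j => c (j + 1)) hleft (fun j _ => hadj (j + 1))
    fun j hj j' hj' h => by
      have := hinj (show j + 1 < N + 2 by simp only [mem_Iic] at hj; omega)
        (show j' + 1 < N + 2 by simp only [mem_Iic] at hj'; omega) h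
      omega
  obtain ⟨i, hi⟩ := Sum.isLeft_iff.1 (hleft 0 N.zero_le)
  obtain ⟨i', hi'⟩ := Sum.isLeft_iff.1 (hleft N le_rfl)
  have hfirst : (Gconstr n).Adj (.inr z) (.inl i) := h0 ▸ hi ▸ hadj 0
  have hlast : (Gconstr n).Adj (.inr z) (.inl i') := by
    simpa only [hi', hclosed, h0] using (hadj (N + 1)).symm
  have hmod := sub_emod_four_ne_two hlast hfirst
  simp only [hi, hi', pathIndex_inl, zero_add] at hpath
  rw [abs_eq (by positivity)] at hpath
  omega

theorem not_four_dvd_of_periodic {c : ℕ → Fin (n + 1) ⊕ Fin 2} {L : ℕ} {w : Fin 2}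
    (hL : 0 < L) (hadj : ∀ j, (Gconstr n).Adj (c j) (c (j + 1))) (hper : Periodic c L)
    (hinj : InjOn c (Iio L)) (hw : ∀ j, c j ≠ .inr w) : ¬ 4 ∣ L := by
  intro h4
  have hL4 : 4 ≤ L := Nat.le_of_dvd hL h4
  by_cases hleft : ∀ j, (c j).isLeft
  · have := eq_two_of_closed_of_isLeft hL hadj (by simpa using hper 0) hinj hleft
    omega
  · obtain ⟨k, hk⟩ := not_forall.1 hleft
    obtain ⟨z, hz⟩ := Sum.isRight_iff.1 (Sum.not_isLeft.1 hk)
    have hzw : z ≠ w := by rintro rfl; exact hw k hz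
    -- rotate the cycle so that it starts at the apex
    exact not_four_dvd_of_closed_of_eq_inr hzw (by omega)
      (fun j => by simpa only [add_assoc] using hadj (k + j)) (by simpa using hper k)
      (hper.injOn_Iio_const_add hinj k) (by simpa using hz) (fun _ => hw _) h4

end Gconstr

/-- For every `m ≥ 1`, the subgraph of `G_n` induced by `{x} ∪ V(P)` contains no cycle of
length `4m`, and likewise for `{y} ∪ V(P)`. -/
theorem Gconstr_induce_cycle_free (n m : ℕ) (hm : 1 ≤ m) :
    ¬ ContainsSub ((Gconstr n).induce {v | v ≠ Sum.inr 1})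
        (SimpleGraph.cycleGraph (4 * m)) ∧
    ¬ ContainsSub ((Gconstr n).induce {v | v ≠ Sum.inr 0})
        (SimpleGraph.cycleGraph (4 * m)) := by
  have hfree (w : Fin 2) :
      ¬ ContainsSub ((Gconstr n).induce {v | v ≠ Sum.inr w}) (cycleGraph (4 * m)) := by
    intro h
    obtain ⟨c, hadj, hper, hinj⟩ := h.exists_periodic_injOn (by omega)
    exact Gconstr.not_four_dvd_of_periodic (c := Subtype.val ∘ c) (by omega) hadj
      (hper.comp _) (Subtype.val_injective.comp_injOn hinj) (fun j => (c j).2) (dvd_mul_right 4 m)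
  exact ⟨hfree 1, hfree 0⟩
end
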